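/- arXiv:1204.1134 — 6 statements merged into one kernel-verified Lean document; each statement's English description precedes it below -/
import Mathlib

section
/- For every infinite M ⊆ ℕ and every coloring C of the exactly large finite subsets of ℕ in two colors, there exists an infinite L ⊆ M such that C is constant on all exactly large subsets of L. -/
/-- A finite set `S ⊆ ℕ` is exactly large if `|S| = min S + 1`. -/
def ExactlyLarge (S : Finset ℕ) : Prop :=
  ∃ h : S.Nonempty, S.card = S.min' h + 1

/-- `L` is homogeneous for a coloring `C` of exactly large sets: `C` is constant
on all exactly large subsets of `L`. -/
def HomogFor {β : Type*} (C : Finset ℕ → β) (L : Set ℕ) : Prop :=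
  ∃ c : β, ∀ S : Finset ℕ, ↑S ⊆ L → ExactlyLarge S → C S = c

/-- `H` is min-homogeneous for `C`: on exactly large subsets of `H`, the value
of `C` depends only on the minimum. -/
def MinHomogFor {β : Type*} (C : Finset ℕ → β) (H : Set ℕ) : Prop :=
  ∀ S S' : Finset ℕ, ↑S ⊆ H → ↑S' ⊆ H → ExactlyLarge S → ExactlyLarge S' →
    S.min = S'.min → C S = C S'

/-- A coloring of exactly large sets is regressive if `C S < min S` whenever `min S > 0`. -/
def RegressiveEL (C : Finset ℕ → ℕ) : Prop :=
  ∀ S : Finset ℕ, ExactlyLarge S → ∀ h : S.Nonempty, 0 < S.min' h → C S < S.min' h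


/-- Core construction: thin out `M` along a sequence of minima, then pigeonhole. -/
theorem coreB (g : ℕ → ℕ) (f : Finset ℕ → Fin 2) (M : Set ℕ) (hM : M.Infinite)
    (step : ∀ a : ℕ, ∀ M' : Set ℕ, M'.Infinite →
      ∃ (N : Set ℕ) (c : Fin 2), N ⊆ M' ∧ N.Infinite ∧ (∀ x ∈ N, a < x) ∧
        ∀ S : Finset ℕ, ↑S ⊆ N → S.card = g a → f (insert a S) = c) :
    ∃ L ⊆ M, L.Infinite ∧ ∃ c : Fin 2, ∀ S : Finset ℕ, ↑S ⊆ L →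
      (∃ h : S.Nonempty, S.card = g (S.min' h) + 1) → f S = c := by
  choose N cf hsub hinf hgt hc using step
  -- the decreasing sequence of infinite sets
  let F : ℕ → {S : Set ℕ // S.Infinite} := fun k =>
    Nat.rec ⟨M, hM⟩ (fun _ p => ⟨N (sInf p.1) p.1 p.2, hinf _ _ _⟩) k
  set a : ℕ → ℕ := fun k => sInf (F k).1 with ha
  have hFsucc : ∀ k, (F (k + 1)).1 = N (a k) (F k).1 (F k).2 := fun k => rfl
  have hmem : ∀ k, a k ∈ (F k).1 := fun k => Nat.sInf_mem (F k).2.nonempty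
  have hsub' : ∀ k, (F (k + 1)).1 ⊆ (F k).1 := fun k => by
    rw [hFsucc]; exact hsub _ _ _
  have hchain : ∀ j k, j ≤ k → (F k).1 ⊆ (F j).1 := by
    intro j k hjk
    induction k with
    | zero => simp_all
    | succ k ih =>
      rcases Nat.lt_or_ge j (k + 1) with h | h
      · exact (hsub' k).trans (ih (Nat.lt_succ_iff.mp h))
      · have : j = k + 1 := le_antisymm hjk h
        subst this; exact subset_rfl
  have hlt : ∀ k, ∀ x ∈ (F (k + 1)).1, a k < x := fun k => by
    rw [hFsucc]; exact hgt _ _ _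
  have hamono : StrictMono a := strictMono_nat_of_lt_succ fun k =>
    hlt k _ (hmem (k + 1))
  have haM : ∀ k, a k ∈ M := fun k => hchain 0 k (Nat.zero_le k) (hmem k)
  have htail : ∀ k j, k < j → a j ∈ (F (k + 1)).1 := fun k j hkj =>
    hchain (k + 1) j hkj (hmem j)
  -- the colors
  set col : ℕ → Fin 2 := fun k => cf (a k) (F k).1 (F k).2 with hcol
  obtain ⟨c0, hc0⟩ := Finite.exists_infinite_fiber col
  have hK : {k : ℕ | col k = c0}.Infinite := by
    rw [← Set.infinite_coe_iff]; exact hc0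
  refine ⟨a '' {k : ℕ | col k = c0}, ?_, hK.image (hamono.injective.injOn), c0, ?_⟩
  · rintro x ⟨k, -, rfl⟩; exact haM k
  intro S hSL ⟨hne, hcard⟩
  have hmin : S.min' hne ∈ (S : Set ℕ) := S.min'_mem hne
  obtain ⟨k, hk, hak⟩ := hSL hmin
  set S' : Finset ℕ := S.erase (S.min' hne) with hS'
  have hS'sub : ↑S' ⊆ (F (k + 1)).1 := by
    intro x hx
    have hx' : x ∈ S' := hx
    obtain ⟨j, -, haj⟩ := hSL (Finset.erase_subset _ _ hx')
    have hxne : x ≠ S.min' hne := Finset.ne_of_mem_erase hx'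
    have hminlt : S.min' hne < x :=
      lt_of_le_of_ne (S.min'_le x (Finset.erase_subset _ _ hx')) (Ne.symm hxne)
    have : a k < a j := by rw [hak, haj]; exact hminlt
    rw [← haj]
    exact htail k j (hamono.lt_iff_lt.mp this)
  have hS'card : S'.card = g (a k) := by
    rw [hS', Finset.card_erase_of_mem (S.min'_mem hne), hcard, ← hak]
    simp
  have hins : insert (a k) S' = S := by
    rw [hS', hak]; exact Finset.insert_erase (S.min'_mem hne)
  have := hc (a k) (F k).1 (F k).2 S' (by rw [← hFsucc]; exact hS'sub) hS'card
  rw [hins] at this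
  rw [this]
  exact hk

/-- The infinite Ramsey theorem for `n`-element subsets, two colors. -/
theorem ramseyN : ∀ n : ℕ, ∀ f : Finset ℕ → Fin 2, ∀ M : Set ℕ, M.Infinite →
    ∃ L ⊆ M, L.Infinite ∧ ∃ c : Fin 2,
      ∀ S : Finset ℕ, ↑S ⊆ L → S.card = n → f S = c := by
  intro n
  induction n with
  | zero =>
    intro f M hM
    refine ⟨M, subset_rfl, hM, f ∅, fun S _ hS => ?_⟩
    rw [Finset.card_eq_zero.mp hS]
  | succ n ih =>
    intro f M hM
    obtain ⟨L, hLM, hLinf, c, hc⟩ := coreB (fun _ => n) f M hM (fun a M' hM' => by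
      have hinf : (M' ∩ Set.Ioi a).Infinite := by
        have h := hM'.diff (Set.finite_Iic a)
        have he : M' \ Set.Iic a = M' ∩ Set.Ioi a := by ext x; simp [not_le]
        rwa [he] at h
      obtain ⟨N, hNsub, hNinf, c, hc⟩ := ih (fun T => f (insert a T)) _ hinf
      exact ⟨N, c, hNsub.trans (Set.inter_subset_left), hNinf,
        fun x hx => (hNsub hx).2, fun S hS hcard => hc S hS hcard⟩)
    refine ⟨L, hLM, hLinf, c, fun S hS hcard => hc S hS ⟨?_, by rw [hcard]⟩⟩
    rw [← Finset.card_pos, hcard]; omega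

/-- The Pudlák–Rödl / Farmaki Ramsey theorem for exactly large sets, RT(!ω):
for every infinite `M ⊆ ℕ` and every 2-coloring of exactly large sets there is
an infinite `L ⊆ M` on whose exactly large subsets the coloring is constant. -/
theorem rt_exactlyLarge (M : Set ℕ) (hM : M.Infinite) (C : Finset ℕ → Fin 2) :
    ∃ L ⊆ M, L.Infinite ∧ HomogFor C L := by
  obtain ⟨L, hLM, hLinf, c, hc⟩ := coreB id C M hM (fun a M' hM' => by
    have hinf : (M' ∩ Set.Ioi a).Infinite := by
      have h := hM'.diff (Set.finite_Iic a)
      have he : M' \ Set.Iic a = M' ∩ Set.Ioi a := by ext x; simp [not_le]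
      rwa [he] at h
    obtain ⟨N, hNsub, hNinf, c, hc⟩ := ramseyN a (fun T => C (insert a T)) _ hinf
    exact ⟨N, c, hNsub.trans (Set.inter_subset_left), hNinf,
      fun x hx => (hNsub hx).2, fun S hS hcard => hc S hS hcard⟩)
  exact ⟨L, hLM, hLinf, c, fun S hS hEL => hc S hS hEL⟩
end

section
/- For every regressive coloring C of the exactly large finite subsets of ℕ and every infinite M ⊆ ℕ, there exists an infinite H ⊆ M that is min-homogeneous for C, i.e., for any two exactly large subsets S, S' of H with min(S) = min(S'), C(S) = C(S'). -/
/-- Fusion lemma: iteratively shrink an infinite set, picking out its minimum at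
each stage, to obtain a strictly increasing sequence such that the predicate `P`
holds of each term together with the set of later terms. -/
lemma fusion (M : Set ℕ) (hM : M.Infinite) (P : ℕ → Set ℕ → Prop)
    (Pmono : ∀ m B B', B' ⊆ B → P m B → P m B')
    (step : ∀ A : Set ℕ, A.Infinite → A ⊆ M →
      ∃ B : Set ℕ, B ⊆ A \ {sInf A} ∧ B.Infinite ∧ P (sInf A) B) :
    ∃ a : ℕ → ℕ, StrictMono a ∧ (∀ i, a i ∈ M) ∧
      ∀ i, P (a i) {x | ∃ j, i < j ∧ x = a j} := by
  classical
  -- the type of infinite subsets of M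
  have step' : ∀ A : {A : Set ℕ // A.Infinite ∧ A ⊆ M},
      ∃ B : {A : Set ℕ // A.Infinite ∧ A ⊆ M},
        B.1 ⊆ A.1 \ {sInf A.1} ∧ P (sInf A.1) B.1 := by
    rintro ⟨A, h1, h2⟩
    obtain ⟨B, hB1, hB2, hB3⟩ := step A h1 h2
    exact ⟨⟨B, hB2, (hB1.trans Set.diff_subset).trans h2⟩, hB1, hB3⟩
  choose F hF1 hF2 using step'
  set A0 : {A : Set ℕ // A.Infinite ∧ A ⊆ M} := ⟨M, hM, subset_rfl⟩ with hA0
  set Aseq : ℕ → {A : Set ℕ // A.Infinite ∧ A ⊆ M} := fun i => F^[i] A0 with hAseq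
  have hsucc : ∀ i, Aseq (i + 1) = F (Aseq i) := by
    intro i; simp [hAseq, Function.iterate_succ_apply']
  set a : ℕ → ℕ := fun i => sInf (Aseq i).1 with ha
  have amem : ∀ i, a i ∈ (Aseq i).1 := fun i => Nat.sInf_mem (Aseq i).2.1.nonempty
  have hstep : ∀ i, (Aseq (i + 1)).1 ⊆ (Aseq i).1 \ {a i} := by
    intro i; rw [hsucc i]; exact hF1 (Aseq i)
  have hlt : ∀ i x, x ∈ (Aseq (i + 1)).1 → a i < x := by
    intro i x hx
    have hx' := hstep i hx
    have h1 : a i ≤ x := Nat.sInf_le hx'.1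
    have h2 : x ≠ a i := hx'.2
    omega
  have nest : ∀ i j, i ≤ j → (Aseq j).1 ⊆ (Aseq i).1 := by
    intro i j hij
    induction j with
    | zero => simp_all
    | succ j ih =>
      rcases Nat.lt_or_ge i (j + 1) with h | h
      · exact ((hstep j).trans Set.diff_subset).trans (ih (by omega))
      · have : i = j + 1 := by omega
        subst this; exact subset_rfl
  have amono : StrictMono a := by
    apply strictMono_nat_of_lt_succ
    intro i
    exact hlt i _ (amem (i + 1))
  refine ⟨a, amono, fun i => (Aseq i).2.2 (amem i), fun i => ?_⟩
  have h2 := hF2 (Aseq i)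
  rw [← hsucc i] at h2
  refine Pmono _ _ _ ?_ h2
  rintro x ⟨j, hij, rfl⟩
  exact nest (i + 1) j hij (amem j)

/-- Infinite hypergraph Ramsey theorem: a coloring of the `n`-element subsets of
an infinite set `A ⊆ ℕ` with fewer than `k` colors is constant on the
`n`-element subsets of some infinite `B ⊆ A`. -/
lemma ramseyInf : ∀ (n k : ℕ) (f : Finset ℕ → ℕ) (A : Set ℕ), A.Infinite →
    (∀ S : Finset ℕ, ↑S ⊆ A → S.card = n → f S < k) →
    ∃ B : Set ℕ, B ⊆ A ∧ B.Infinite ∧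
      ∃ c, ∀ S : Finset ℕ, ↑S ⊆ B → S.card = n → f S = c := by
  intro n
  induction n with
  | zero =>
    intro k f A hA _
    refine ⟨A, subset_rfl, hA, f ∅, fun S _ hc => ?_⟩
    rw [Finset.card_eq_zero.mp hc]
  | succ n ih =>
    intro k f A hA hbd
    set P : ℕ → Set ℕ → Prop := fun m B =>
      ∃ c, c < k ∧ ∀ T : Finset ℕ, ↑T ⊆ B → T.card = n → f (insert m T) = c with hP
    have Pmono : ∀ m B B', B' ⊆ B → P m B → P m B' := by
      rintro m B B' hBB ⟨c, hck, hc⟩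
      exact ⟨c, hck, fun T hT hcard => hc T (hT.trans hBB) hcard⟩
    have step : ∀ A' : Set ℕ, A'.Infinite → A' ⊆ A →
        ∃ B : Set ℕ, B ⊆ A' \ {sInf A'} ∧ B.Infinite ∧ P (sInf A') B := by
      intro A' hinf hsub
      set m := sInf A' with hm
      have hmA : m ∈ A' := Nat.sInf_mem hinf.nonempty
      have hbd' : ∀ T : Finset ℕ, ↑T ⊆ A' \ {m} → T.card = n → f (insert m T) < k := by
        intro T hT hcard
        have hmT : m ∉ T := fun h => (hT h).2 rfl
        apply hbd
        · intro x hx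
          rcases Finset.mem_insert.mp hx with rfl | hx
          · exact hsub hmA
          · exact hsub ((hT hx).1)
        · rw [Finset.card_insert_of_notMem hmT, hcard]
      obtain ⟨B, hB1, hB2, c, hc⟩ := ih k (fun T => f (insert m T)) (A' \ {m})
        (hinf.diff (Set.finite_singleton m)) hbd'
      obtain ⟨T₀, hT₀, hT₀c⟩ := hB2.exists_subset_card_eq n
      have hck : c < k := by
        rw [← hc T₀ hT₀ hT₀c]
        exact hbd' T₀ (hT₀.trans hB1) hT₀c
      exact ⟨B, hB1, hB2, c, hck, fun T hT hcard => hc T hT hcard⟩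
    obtain ⟨a, amono, amem, haP⟩ := fusion A hA P Pmono step
    choose col hcolk hcol using haP
    have hk : 0 < k := lt_of_le_of_lt (Nat.zero_le _) (hcolk 0)
    haveI : NeZero k := ⟨by omega⟩
    obtain ⟨y, hy⟩ := Finite.exists_infinite_fiber (fun i => (⟨col i, hcolk i⟩ : Fin k))
    rw [Set.infinite_coe_iff] at hy
    refine ⟨a '' ((fun i => (⟨col i, hcolk i⟩ : Fin k)) ⁻¹' {y}),
      ?_, hy.image (amono.injective.injOn), (y : ℕ), ?_⟩
    · rintro x ⟨i, _, rfl⟩; exact amem i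
    · intro S hS hcard
      have hSne : S.Nonempty := Finset.card_pos.mp (by omega)
      have hmin : (S.min' hSne : ℕ) ∈ (↑S : Set ℕ) := S.min'_mem hSne
      obtain ⟨i, hiI, hia⟩ := hS hmin
      set T := S.erase (S.min' hSne) with hT
      have hTcard : T.card = n := by
        rw [hT, Finset.card_erase_of_mem (S.min'_mem hSne), hcard]
        omega
      have hTsub : ↑T ⊆ {x | ∃ j, i < j ∧ x = a j} := by
        intro x hx
        have hxS : x ∈ S := Finset.mem_of_mem_erase hx
        have hxne : x ≠ S.min' hSne := Finset.ne_of_mem_erase hx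
        obtain ⟨j, _, hja⟩ := hS hxS
        have : a i < a j := by
          rw [hia, hja]
          exact lt_of_le_of_ne (S.min'_le x hxS) hxne.symm
        exact ⟨j, amono.lt_iff_lt.mp this, hja.symm⟩
      have hins : insert (S.min' hSne) T = S := Finset.insert_erase (S.min'_mem hSne)
      have := hcol i T hTsub hTcard
      rw [hia, hins] at this
      rw [this]
      have : (⟨col i, hcolk i⟩ : Fin k) = y := hiI
      exact congrArg Fin.val this

/-- The regressive Ramsey theorem for exactly large sets, KM(!ω): every
regressive coloring of exactly large sets admits, inside every infinite set, an
infinite min-homogeneous subset. -/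
theorem km_exactlyLarge (C : Finset ℕ → ℕ) (hC : RegressiveEL C)
    (M : Set ℕ) (hM : M.Infinite) :
    ∃ H ⊆ M, H.Infinite ∧ MinHomogFor C H := by
  classical
  set P : ℕ → Set ℕ → Prop := fun m B =>
    ∃ c, ∀ T : Finset ℕ, ↑T ⊆ B → T.card = m → C (insert m T) = c with hP
  have Pmono : ∀ m B B', B' ⊆ B → P m B → P m B' := by
    rintro m B B' hBB ⟨c, hc⟩
    exact ⟨c, fun T hT hcard => hc T (hT.trans hBB) hcard⟩
  have step : ∀ A' : Set ℕ, A'.Infinite → A' ⊆ M →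
      ∃ B : Set ℕ, B ⊆ A' \ {sInf A'} ∧ B.Infinite ∧ P (sInf A') B := by
    intro A' hinf _
    set m := sInf A' with hm
    have hbd : ∀ T : Finset ℕ, ↑T ⊆ A' \ {m} → T.card = m →
        C (insert m T) < C {0} + m + 1 := by
      intro T hT hcard
      have hmT : m ∉ T := fun h => (hT h).2 rfl
      rcases Nat.eq_zero_or_pos m with hm0 | hm0
      · have : T = ∅ := Finset.card_eq_zero.mp (by omega)
        subst this; rw [hm0]; simp
      · -- insert m T is exactly large with min m
        set S := insert m T with hS
        have hSne : S.Nonempty := ⟨m, Finset.mem_insert_self _ _⟩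
        have hmins : S.min' hSne = m := by
          apply le_antisymm (S.min'_le m (Finset.mem_insert_self _ _))
          have := S.min'_mem hSne
          rcases Finset.mem_insert.mp this with h | h
          · omega
          · have hx := hT h
            have : m ≤ S.min' hSne := Nat.sInf_le hx.1
            exact this
        have hEL : ExactlyLarge S := by
          refine ⟨hSne, ?_⟩
          rw [hmins, hS, Finset.card_insert_of_notMem hmT, hcard]
        have := hC S hEL hSne (by omega)
        rw [hmins] at this
        omega
    obtain ⟨B, hB1, hB2, c, hc⟩ := ramseyInf m (C {0} + m + 1)
      (fun T => C (insert m T)) (A' \ {m}) (hinf.diff (Set.finite_singleton m)) hbd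
    exact ⟨B, hB1, hB2, c, hc⟩
  obtain ⟨a, amono, amem, haP⟩ := fusion M hM P Pmono step
  choose col hcol using haP
  refine ⟨a '' Set.univ, ?_, (Set.infinite_univ).image (amono.injective.injOn), ?_⟩
  · rintro x ⟨i, _, rfl⟩; exact amem i
  · -- min-homogeneity
    have aux : ∀ (S : Finset ℕ) (hSne : S.Nonempty), ↑S ⊆ a '' Set.univ →
        S.card = S.min' hSne + 1 → ∀ i, a i = S.min' hSne → C S = col i := by
      intro S hSne hS hcard i hia
      set T := S.erase (S.min' hSne) with hT
      have hTcard : T.card = a i := by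
        rw [hT, Finset.card_erase_of_mem (S.min'_mem hSne), hcard, hia]
        omega
      have hTsub : ↑T ⊆ {x | ∃ j, i < j ∧ x = a j} := by
        intro x hx
        have hxS : x ∈ S := Finset.mem_of_mem_erase hx
        have hxne : x ≠ S.min' hSne := Finset.ne_of_mem_erase hx
        obtain ⟨j, -, hja⟩ := hS hxS
        have : a i < a j := by
          rw [hia, hja]
          exact lt_of_le_of_ne (S.min'_le x hxS) hxne.symm
        exact ⟨j, amono.lt_iff_lt.mp this, hja.symm⟩
      have h := hcol i T hTsub hTcard
      rw [hia, hT, Finset.insert_erase (S.min'_mem hSne)] at h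
      exact h
    intro S S' hS hS' hEL hEL' hmin
    obtain ⟨hSne, hScard⟩ := hEL
    obtain ⟨hSne', hScard'⟩ := hEL'
    have hmm : S.min' hSne = S'.min' hSne' := by
      have h1 := S.coe_min' hSne
      have h2 := S'.coe_min' hSne'
      rw [← h1, ← h2] at hmin
      exact_mod_cast hmin
    obtain ⟨i, -, hia⟩ := hS (S.min'_mem hSne)
    rw [aux S hSne hS hScard i hia, aux S' hSne' hS' hScard' i (by rw [hia, hmm])]
end

section
/- If every regressive coloring of exactly large sets admits, within every infinite set, an infinite min-homogeneous subset, then every 2-coloring of exactly large sets admits, within every infinite set, an infinite homogeneous subset. (KM(!ω) implies RT(!ω).) -/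
theorem Set.Infinite.exists_exactlyLarge_subset_min_eq {H : Set ℕ} (hH : H.Infinite) {m : ℕ}
    (hm : m ∈ H) : ∃ S : Finset ℕ, ↑S ⊆ H ∧ ExactlyLarge S ∧ S.min = m := by
  obtain ⟨t, ht, htcard⟩ := (hH.sdiff (Set.finite_Iic m)).exists_subset_card_eq m
  have hgt : ∀ x ∈ t, m < x := fun x hx => not_le.mp (ht hx).2
  have hmin : (insert m t).min' (Finset.insert_nonempty m t) = m :=
    le_antisymm (Finset.min'_le _ _ (Finset.mem_insert_self m t))
      (Finset.le_min' _ _ _ (by simpa using fun x hx => (hgt x hx).le))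
  refine ⟨insert m t, ?_, ⟨Finset.insert_nonempty m t, ?_⟩, ?_⟩
  · simpa [Set.insert_subset_iff] using ⟨hm, fun x hx => (ht hx).1⟩
  · rw [hmin, Finset.card_insert_of_notMem fun h => lt_irrefl m (hgt m h), htcard]
  · rw [← Finset.coe_min' (Finset.insert_nonempty m t), hmin]
    rfl

namespace MinHomogFor

variable {β : Type*} {C : Finset ℕ → β} {H : Set ℕ}

theorem mono {H' : Set ℕ} (hC : MinHomogFor C H) (hH' : H' ⊆ H) : MinHomogFor C H' :=
  fun S S' hS hS' => hC S S' (hS.trans hH') (hS'.trans hH')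

theorem of_comp {γ : Type*} {g : β → γ} (hg : g.Injective) (hC : MinHomogFor (g ∘ C) H) :
    MinHomogFor C H :=
  fun S S' hS hS' hSl hSl' hmin => hg (hC S S' hS hS' hSl hSl' hmin)

theorem congr {D : Finset ℕ → β} (hC : MinHomogFor C H)
    (hCD : ∀ S : Finset ℕ, ↑S ⊆ H → C S = D S) : MinHomogFor D H :=
  fun S S' hS hS' hSl hSl' hmin => by
    rw [← hCD S hS, ← hCD S' hS', hC S S' hS hS' hSl hSl' hmin]

theorem exists_eq_comp_min' (hC : MinHomogFor C H) (hH : H.Infinite) :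
    ∃ f : ℕ → β, ∀ S : Finset ℕ, ↑S ⊆ H → ∀ hS : ExactlyLarge S, C S = f (S.min' hS.1) := by
  classical
  choose! T hTH hTl hTmin using fun m (hm : m ∈ H) => hH.exists_exactlyLarge_subset_min_eq hm
  refine ⟨fun m => C (T m), fun S hS hSl => ?_⟩
  have hmem : S.min' hSl.1 ∈ H := hS (S.min'_mem hSl.1)
  refine hC S _ hS (hTH _ hmem) hSl (hTl _ hmem) ?_
  rw [hTmin _ hmem]
  exact (Finset.coe_min' hSl.1).symm

theorem exists_homogFor [Finite β] (hC : MinHomogFor C H) (hH : H.Infinite) :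
    ∃ L ⊆ H, L.Infinite ∧ HomogFor C L := by
  obtain ⟨f, hf⟩ := hC.exists_eq_comp_min' hH
  obtain ⟨c, hc⟩ : ∃ c : β, {m ∈ H | f m = c}.Infinite := by
    by_contra! hfin
    exact hH ((Set.finite_iUnion hfin).subset fun m hm => Set.mem_iUnion.mpr ⟨f m, hm, rfl⟩)
  refine ⟨{m ∈ H | f m = c}, Set.sep_subset _ _, hc, c, fun S hS hSl => ?_⟩
  rw [hf S (hS.trans (Set.sep_subset _ _)) hSl]
  exact (hS (S.min'_mem hSl.1)).2

end MinHomogFor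

theorem regressiveEL_ite_forall_le {k : ℕ} (C : Finset ℕ → Fin k) :
    RegressiveEL fun S => if ∀ x ∈ S, k ≤ x then (C S : ℕ) else 0 := by
  intro S _ hS hpos
  dsimp only
  split_ifs with hk
  · exact (C S).isLt.trans_le (hk _ (S.min'_mem hS))
  · exact hpos

theorem exists_homogFor_of_km {k : ℕ}
    (hKM : ∀ C : Finset ℕ → ℕ, RegressiveEL C → ∀ M : Set ℕ, M.Infinite →
      ∃ H ⊆ M, H.Infinite ∧ MinHomogFor C H)
    (C : Finset ℕ → Fin k) {M : Set ℕ} (hM : M.Infinite) :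
    ∃ L ⊆ M, L.Infinite ∧ HomogFor C L := by
  obtain ⟨H, hHM, hH, hD⟩ := hKM _ (regressiveEL_ite_forall_le C) M hM
  set H' := H ∩ Set.Ici k
  have hH' : H'.Infinite := by
    simpa [H', ← Set.sdiff_compl, Set.compl_Ici] using hH.sdiff (Set.finite_Iio k)
  have hCH' : MinHomogFor C H' := by
    refine MinHomogFor.of_comp Fin.val_injective ((hD.mono Set.inter_subset_left).congr ?_)
    intro S hS
    simp only [Function.comp_apply, ite_eq_left_iff]
    exact fun hk => absurd (fun x hx => (hS hx).2) hk
  obtain ⟨L, hLH', hL, hCL⟩ := hCH'.exists_homogFor hH'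
  exact ⟨L, hLH'.trans (Set.inter_subset_left.trans hHM), hL, hCL⟩

/-- KM(!ω) implies RT(!ω). -/
theorem km_implies_rt
    (hKM : ∀ C : Finset ℕ → ℕ, RegressiveEL C → ∀ M : Set ℕ, M.Infinite →
      ∃ H ⊆ M, H.Infinite ∧ MinHomogFor C H) :
    ∀ C : Finset ℕ → Fin 2, ∀ M : Set ℕ, M.Infinite →
      ∃ L ⊆ M, L.Infinite ∧ HomogFor C L :=
  fun C _ hM => exists_homogFor_of_km hKM C hM
end

section
/- Let C be a 2-coloring of exactly large sets, viewed on sets with min ≥ 2 as a regressive coloring (since C(S) < 2 ≤ min(S)). If H ⊆ [2, ∞) is infinite and min-homogeneous for C, then the function g : H → Fin 2 assigning to h the common value of C on exactly large subsets of H with minimum h is well-defined, and any infinite subset H' ⊆ H on which g is constant is homogeneous for C. -/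
/-- If `H ⊆ [2, ∞)` is infinite and min-homogeneous for a 2-coloring `C` of
exactly large sets, then the induced map `g` sending `h ∈ H` to the common
`C`-value on exactly large subsets of `H` with minimum `h` is well-defined, and
any infinite `H' ⊆ H` on which `g` is constant is homogeneous for `C`. -/
theorem minHomog_induced_coloring (C : Finset ℕ → Fin 2) (H : Set ℕ)
    (hH2 : H ⊆ Set.Ici 2) (hHinf : H.Infinite) (hmin : MinHomogFor C H) :
    ∃ g : ℕ → Fin 2,
      (∀ (S : Finset ℕ) (h : S.Nonempty), ↑S ⊆ H → ExactlyLarge S →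
        C S = g (S.min' h)) ∧
      ∀ H' ⊆ H, H'.Infinite → (∃ c, ∀ x ∈ H', g x = c) → HomogFor C H' := by
  classical
  set P : ℕ → Finset ℕ → Prop :=
    fun n S => ↑S ⊆ H ∧ ExactlyLarge S ∧ S.min = (n : ℕ) with hP
  refine ⟨fun n => if h : ∃ S, P n S then C h.choose else 0, ?_, ?_⟩
  · intro S h hS hEL
    have hex : ∃ S', P (S.min' h) S' := ⟨S, hS, hEL, (Finset.coe_min' h).symm⟩
    simp only [dif_pos hex]
    obtain ⟨h1, h2, h3⟩ := hex.choose_spec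
    exact hmin S _ hS h1 hEL h2 (by rw [h3]; exact (Finset.coe_min' h).symm)
  · rintro H' hH'H _ ⟨c, hc⟩
    refine ⟨c, fun S hS hEL => ?_⟩
    obtain ⟨h, -⟩ := id hEL
    have hmem : S.min' h ∈ H' := hS (S.min'_mem h)
    have := hc _ hmem
    rw [← this]
    have hex : ∃ S', P (S.min' h) S' :=
      ⟨S, hS.trans hH'H, hEL, (Finset.coe_min' h).symm⟩
    simp only [dif_pos hex]
    obtain ⟨h1, h2, h3⟩ := hex.choose_spec
    exact hmin S _ (hS.trans hH'H) h1 hEL h2 (by rw [h3]; exact (Finset.coe_min' h).symm)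
end

section
/- Let C : [ℕ]^{!ω} → ℕ be a regressive coloring of exactly large sets. Define C' : [ℕ]^{!ω} → Fin 2 by: for an exactly large set A = {a₀ < a₁ < ⋯ < a_k} (with k = a₀ ≥ 1), C'(A) = 1 if all exactly large tuples of the form (a₀ − 1, c₁, …, c_{a₀−1}) with {c₁, …, c_{a₀−1}} ⊆ {aᵢ − 1 : 1 ≤ i ≤ k} get the same color under C, and C'(A) = 0 otherwise. If X is an infinite C'-homogeneous set, then Y = {x − 1 : x ∈ X} is min-homogeneous for C. -/
/-!
Ramsey's theorem for `m`-sets, applied to `T ↦ C ({m} ∪ T)` (fewer than `m` colours, by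
regressiveness), produces an exactly large `A ⊆ X` with `C' A = 1`, so `C'` is `1` on every exactly
large subset of `X`. Consequently two exactly large sets `{m} ∪ T` and `{m} ∪ T'` in `Y` whose
parts `T`, `T'` differ in one element lie in `A - 1` for an exactly large `A ⊆ X`, and get the same
`C`-colour. Any two `m`-sets are joined by a chain of such single exchanges.
-/

open Finset

theorem Finset.apply_eq_apply_of_exchange {α β : Type*} [DecidableEq α] {Z : Set α} {k : ℕ}
    {g : Finset α → β}
    (hg : ∀ T T' : Finset α, ↑T ⊆ Z → ↑T' ⊆ Z → #T = k → #T' = k → #(T ∪ T') = k + 1 →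
      g T = g T')
    {T T' : Finset α} (hT : ↑T ⊆ Z) (hT' : ↑T' ⊆ Z) (hTk : #T = k) (hT'k : #T' = k) :
    g T = g T' := by
  obtain ⟨n, hn⟩ : ∃ n, #(T \ T') = n := ⟨_, rfl⟩
  induction n generalizing T with
  | zero =>
    have hsub : T ⊆ T' := sdiff_eq_empty_iff_subset.mp (card_eq_zero.mp hn)
    rw [eq_of_subset_of_card_le hsub (by omega)]
  | succ n ih =>
    obtain ⟨a, ha⟩ : (T \ T').Nonempty := card_pos.mp (by omega)
    obtain ⟨b, hb⟩ : (T' \ T).Nonempty := by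
      have := card_sdiff_eq_card_sdiff_iff.mpr (hT'k.trans hTk.symm)
      exact card_pos.mp (by omega)
    rw [mem_sdiff] at ha hb
    set T₁ := insert b (T.erase a)
    have hb₁ : b ∉ T.erase a := fun h => hb.2 (mem_of_mem_erase h)
    have hT₁ : ↑T₁ ⊆ Z := by
      simp only [T₁, coe_insert, coe_erase]
      exact Set.insert_subset (hT' hb.1) (Set.sdiff_subset.trans hT)
    have hT₁k : #T₁ = k := by
      have := card_pos.mpr ⟨a, ha.1⟩
      rw [card_insert_of_notMem hb₁, card_erase_of_mem ha.1]; omega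
    have hunion : #(T ∪ T₁) = k + 1 := by
      rw [show T ∪ T₁ = insert b T by ext; simp only [T₁, mem_union, mem_insert, mem_erase]; tauto,
        card_insert_of_notMem hb.2, hTk]
    have hT₁n : #(T₁ \ T') = n := by
      have : T₁ \ T' = (T \ T').erase a := by
        ext x
        simp only [T₁, mem_sdiff, mem_insert, mem_erase]
        constructor
        · rintro ⟨rfl | h, hx⟩
          · exact absurd hb.1 hx
          · exact ⟨h.1, h.2, hx⟩
        · rintro ⟨h₁, h₂, h₃⟩
          exact ⟨Or.inr ⟨h₁, h₂⟩, h₃⟩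
      rw [this, card_erase_of_mem (mem_sdiff.mpr ha), hn, Nat.add_sub_cancel]
    exact (hg T T₁ hT hT₁ hTk hT₁k hunion).trans (ih hT₁ hT₁k hT₁n)

theorem Finset.min_eq_natCast_iff_isLeast {s : Finset ℕ} {a : ℕ} :
    s.min = (a : WithTop ℕ) ↔ IsLeast (s : Set ℕ) a := by
  rw [Nat.cast_withTop]
  refine ⟨fun h => ⟨mem_of_min h, fun b hb => min_le_of_eq hb h⟩, fun h => ?_⟩
  have hne : s.Nonempty := ⟨a, h.1⟩
  rw [← coe_min' hne, (isLeast_min' s hne).unique h]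

theorem exists_strictMono_of_forall_infinite {X : Set ℕ} (hX : X.Infinite) {p : ℕ → Set ℕ → Prop}
    (hp : ∀ x W W', W' ⊆ W → p x W → p x W')
    (h : ∀ Z ⊆ X, Z.Infinite → ∃ x ∈ Z, ∃ W ⊆ Z, W.Infinite ∧ (∀ w ∈ W, x < w) ∧ p x W) :
    ∃ x : ℕ → ℕ, StrictMono x ∧ (∀ i, x i ∈ X) ∧ ∀ i, p (x i) (x '' Set.Ioi i) := by
  choose! x hxZ W hWZ hWinf hxW hpW using h
  set Zs : ℕ → Set ℕ := fun i => W^[i] X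
  have hZs : ∀ i, Zs i ⊆ X ∧ (Zs i).Infinite := by
    intro i
    induction i with
    | zero => exact ⟨subset_rfl, hX⟩
    | succ i ih =>
      simp only [Zs, Function.iterate_succ_apply']
      exact ⟨(hWZ _ ih.1 ih.2).trans ih.1, hWinf _ ih.1 ih.2⟩
  have hsucc : ∀ i, Zs (i + 1) = W (Zs i) := fun i => Function.iterate_succ_apply' W i X
  have hanti : Antitone Zs := antitone_nat_of_succ_le fun i => by
    rw [hsucc]; exact hWZ _ (hZs i).1 (hZs i).2
  have hmem : ∀ i, x (Zs i) ∈ Zs i := fun i => hxZ _ (hZs i).1 (hZs i).2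
  have hlater : ∀ i j, i < j → x (Zs j) ∈ W (Zs i) := fun i j hij =>
    hsucc i ▸ hanti hij (hmem j)
  refine ⟨fun i => x (Zs i), fun i j hij => hxW _ (hZs i).1 (hZs i).2 _ (hlater i j hij),
    fun i => (hZs i).1 (hmem i), fun i => hp _ _ _ ?_ (hpW _ (hZs i).1 (hZs i).2)⟩
  rintro _ ⟨j, hij, rfl⟩
  exact hlater i j hij

theorem exists_infinite_setOf_eq_of_lt {k : ℕ} {c : ℕ → ℕ} (hc : ∀ i, c i < k) :
    ∃ c₀, {i | c i = c₀}.Infinite := by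
  obtain ⟨y, hy⟩ := Finite.exists_infinite_fiber fun i => (⟨c i, hc i⟩ : Fin k)
  refine ⟨y, ?_⟩
  convert Set.infinite_coe_iff.mp hy using 1
  ext i
  simp [Fin.ext_iff]

theorem infinite_ramsey (n : ℕ) {k : ℕ} {f : Finset ℕ → ℕ} {X : Set ℕ} (hX : X.Infinite)
    (hf : ∀ S : Finset ℕ, ↑S ⊆ X → #S = n → f S < k) :
    ∃ Y ⊆ X, Y.Infinite ∧ ∃ c < k, ∀ S : Finset ℕ, ↑S ⊆ Y → #S = n → f S = c := by
  induction n generalizing f X with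
  | zero =>
    exact ⟨X, subset_rfl, hX, f ∅, hf ∅ (by simp) rfl, fun S _ hS => by rw [card_eq_zero.mp hS]⟩
  | succ n ih =>
    -- choose `x₀ < x₁ < ⋯` so that `f (insert xᵢ T)` depends only on `i` for `T ⊆ {xⱼ | j > i}`
    obtain ⟨x, hx, hxX, hc⟩ := exists_strictMono_of_forall_infinite hX
      (p := fun x W => ∃ c < k, ∀ T : Finset ℕ, ↑T ⊆ W → #T = n → f (insert x T) = c)
      (fun x W W' hW ⟨c, hck, hc⟩ => ⟨c, hck, fun T hT => hc T (hT.trans hW)⟩) <| by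
        intro Z hZX hZ
        obtain ⟨x, hxZ⟩ := hZ.nonempty
        have hgt : ∀ w ∈ Z \ Set.Iic x, x < w := fun w hw => not_le.mp hw.2
        obtain ⟨W, hW, hWinf, hcW⟩ := ih (f := fun T => f (insert x T))
          (hZ.sdiff (Set.finite_Iic x)) fun T hT hTn => hf _
            (by
              rw [coe_insert]
              exact Set.insert_subset (hZX hxZ) (hT.trans (Set.sdiff_subset.trans hZX)))
            (by rw [card_insert_of_notMem fun h => (hgt x (hT h)).false, hTn])
        exact ⟨x, hxZ, W, hW.trans Set.sdiff_subset, hWinf, fun w hw => hgt w (hW hw), hcW⟩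
    choose c hck hc using hc
    obtain ⟨c₀, hI⟩ := exists_infinite_setOf_eq_of_lt hck
    refine ⟨x '' {i | c i = c₀}, by rintro _ ⟨i, -, rfl⟩; exact hxX i,
      hI.image hx.injective.injOn, c₀, ?_, ?_⟩
    · obtain ⟨i, hi⟩ := hI.nonempty
      exact hi ▸ hck i
    · intro S hS hSn
      have hne : S.Nonempty := card_pos.mp (by omega)
      obtain ⟨i, hi, hxi⟩ := hS (S.min'_mem hne)
      have hrest : ↑(S.erase (x i)) ⊆ x '' Set.Ioi i := by
        intro t ht
        rw [coe_erase] at ht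
        obtain ⟨j, -, rfl⟩ := hS ht.1
        have hle : x i ≤ x j := hxi ▸ S.min'_le _ ht.1
        exact ⟨j, hx.lt_iff_lt.mp (lt_of_le_of_ne hle (Ne.symm ht.2)), rfl⟩
      have hmem : x i ∈ S := hxi ▸ S.min'_mem hne
      rw [← insert_erase hmem, hc i _ hrest (by rw [card_erase_of_mem hmem, hSn]; rfl), hi]

theorem exactlyLarge_iff_exists_isLeast {S : Finset ℕ} :
    ExactlyLarge S ↔ ∃ m, IsLeast (S : Set ℕ) m ∧ #S = m + 1 := by
  refine ⟨fun ⟨h, hS⟩ => ⟨_, isLeast_min' S h, hS⟩, fun ⟨m, hm, hS⟩ => ?_⟩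
  have hne : S.Nonempty := ⟨m, hm.1⟩
  exact ⟨hne, by rw [hS, (isLeast_min' S hne).unique hm]⟩

theorem isLeast_insert_of_forall_lt {m : ℕ} {T : Finset ℕ} (hT : ∀ t ∈ T, m < t) :
    IsLeast ((insert m T : Finset ℕ) : Set ℕ) m := by
  refine ⟨mem_insert_self m T, fun s hs => ?_⟩
  rcases mem_insert.mp hs with rfl | hs
  exacts [le_rfl, (hT s hs).le]

theorem exactlyLarge_insert {m : ℕ} {T : Finset ℕ} (hT : ∀ t ∈ T, m < t) (hTm : #T = m) :
    ExactlyLarge (insert m T) :=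
  exactlyLarge_iff_exists_isLeast.mpr ⟨m, isLeast_insert_of_forall_lt hT,
    by rw [card_insert_of_notMem fun h => (hT m h).false, hTm]⟩

theorem IsLeast.lt_of_mem_erase {S : Finset ℕ} {m : ℕ} (hm : IsLeast (S : Set ℕ) m) :
    ∀ t ∈ S.erase m, m < t :=
  fun _ ht => lt_of_le_of_ne (hm.2 (mem_of_mem_erase ht)) (ne_of_mem_erase ht).symm

/-- The condition under which the paper's `C'` colours `A` by `1`, for `U = A - 1` and
`m = min A - 1`. -/
def ConstOnExactlyLarge (C : Finset ℕ → ℕ) (U : Finset ℕ) (m : ℕ) : Prop :=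
  ∀ S S' : Finset ℕ, S ⊆ U → S' ⊆ U → ExactlyLarge S → ExactlyLarge S' →
    S.min = (m : WithTop ℕ) → S'.min = (m : WithTop ℕ) → C S = C S'

theorem exists_constOnExactlyLarge {C : Finset ℕ → ℕ} (hC : RegressiveEL C) {Y : Set ℕ}
    (hY : Y.Infinite) :
    ∃ (U : Finset ℕ) (m : ℕ), ↑U ⊆ Y ∧ 1 ≤ m ∧ IsLeast (U : Set ℕ) m ∧ #U = m + 2 ∧
      ConstOnExactlyLarge C U m := by
  obtain ⟨m, hmY, hm⟩ := hY.exists_gt 0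
  have hgt : ∀ y ∈ Y \ Set.Iic m, m < y := fun y hy => not_le.mp hy.2
  obtain ⟨W, hW, hWinf, c, -, hc⟩ := infinite_ramsey m (k := m) (f := fun T => C (insert m T))
    (hY.sdiff (Set.finite_Iic m)) fun T hT hTm => by
      have hTm' := isLeast_insert_of_forall_lt fun t ht => hgt t (hT ht)
      have := hC _ (exactlyLarge_insert (fun t ht => hgt t (hT ht)) hTm) (insert_nonempty m T)
      rw [(isLeast_min' _ _).unique hTm'] at this
      exact this hm
  obtain ⟨T, hTW, hTm⟩ := hWinf.exists_subset_card_eq (m + 1)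
  have hTgt : ∀ t ∈ T, m < t := fun t ht => hgt t (hW (hTW ht))
  have hcolor : ∀ S ⊆ insert m T, ExactlyLarge S → S.min = (m : WithTop ℕ) → C S = c := by
    intro S hS hSEL hSm
    rw [min_eq_natCast_iff_isLeast] at hSm
    obtain ⟨m', hm', hcard⟩ := exactlyLarge_iff_exists_isLeast.mp hSEL
    cases hm'.unique hSm
    rw [← insert_erase hSm.1]
    exact hc _ (fun t ht => hTW (subset_insert_iff.mp hS ht))
      (by rw [card_erase_of_mem hSm.1, hcard]; rfl)
  refine ⟨insert m T, m, ?_, hm, isLeast_insert_of_forall_lt hTgt, ?_, ?_⟩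
  · rw [coe_insert]
    exact Set.insert_subset hmY fun t ht => (hW (hTW ht)).1
  · rw [card_insert_of_notMem fun h => (hTgt m h).false, hTm]
  · intro S S' hS hS' hSEL hS'EL hSm hS'm
    rw [hcolor S hS hSEL hSm, hcolor S' hS' hS'EL hS'm]

theorem ConstOnExactlyLarge.apply_insert_eq {C : Finset ℕ → ℕ} {m : ℕ} {T T' : Finset ℕ}
    (hC : ConstOnExactlyLarge C (insert m (T ∪ T')) m) (hT : ∀ t ∈ T, m < t)
    (hT' : ∀ t ∈ T', m < t) (hTm : #T = m) (hT'm : #T' = m) :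
    C (insert m T) = C (insert m T') :=
  hC _ _ (insert_subset_insert _ subset_union_left) (insert_subset_insert _ subset_union_right)
    (exactlyLarge_insert hT hTm) (exactlyLarge_insert hT' hT'm)
    (min_eq_natCast_iff_isLeast.mpr (isLeast_insert_of_forall_lt hT))
    (min_eq_natCast_iff_isLeast.mpr (isLeast_insert_of_forall_lt hT'))

theorem minHomogFor_of_forall_constOnExactlyLarge {C : Finset ℕ → ℕ} {Y : Set ℕ}
    (hY : ∀ (U : Finset ℕ) (m : ℕ), ↑U ⊆ Y → 1 ≤ m → IsLeast (U : Set ℕ) m → #U = m + 2 →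
      ConstOnExactlyLarge C U m) :
    MinHomogFor C Y := by
  intro S S' hS hS' hSEL hS'EL hmin
  obtain ⟨m, hSm, hScard⟩ := exactlyLarge_iff_exists_isLeast.mp hSEL
  have hS'm : IsLeast (S' : Set ℕ) m := by
    rw [← min_eq_natCast_iff_isLeast, ← hmin, min_eq_natCast_iff_isLeast]
    exact hSm
  have hS'card : #S' = m + 1 := by
    obtain ⟨m', hm', hcard⟩ := exactlyLarge_iff_exists_isLeast.mp hS'EL
    rwa [hm'.unique hS'm] at hcard
  set Z := Y \ Set.Iic m
  have hrest : ∀ {S : Finset ℕ}, ↑S ⊆ Y → IsLeast (S : Set ℕ) m → #S = m + 1 →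
      ↑(S.erase m) ⊆ Z ∧ #(S.erase m) = m := fun hS hSm hScard =>
    ⟨fun t ht => ⟨hS (mem_of_mem_erase ht), not_le.mpr (hSm.lt_of_mem_erase t ht)⟩,
      by rw [card_erase_of_mem hSm.1, hScard]; rfl⟩
  obtain ⟨hTZ, hTm⟩ := hrest hS hSm hScard
  obtain ⟨hT'Z, hT'm⟩ := hrest hS' hS'm hS'card
  rw [← insert_erase hSm.1, ← insert_erase hS'm.1]
  rcases Nat.eq_zero_or_pos m with rfl | hm
  · rw [card_eq_zero.mp hTm, card_eq_zero.mp hT'm]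
  -- exactly large sets with minimum `m` differing in one element lie in one `U` of size `m + 2`
  refine apply_eq_apply_of_exchange (g := fun T => C (insert m T))
    (fun T T' hT hT' hTm hT'm hTT' => ?_) hTZ hT'Z hTm hT'm
  have hgt : ∀ t ∈ T ∪ T', m < t := fun t ht => by
    rcases mem_union.mp ht with ht | ht
    exacts [not_le.mp (hT ht).2, not_le.mp (hT' ht).2]
  refine (hY (insert m (T ∪ T')) m ?_ hm (isLeast_insert_of_forall_lt hgt) ?_).apply_insert_eq
    (fun t ht => hgt t (mem_union_left _ ht)) (fun t ht => hgt t (mem_union_right _ ht)) hTm hT'm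
  · rw [coe_insert, coe_union]
    exact Set.insert_subset (hS hSm.1)
      (Set.union_subset (hT.trans Set.sdiff_subset) (hT'.trans Set.sdiff_subset))
  · rw [card_insert_of_notMem fun h => (hgt m h).false, hTT']

theorem Set.Infinite.image_sub_one {X : Set ℕ} (hX : X.Infinite) : ((· - 1) '' X).Infinite :=
  Set.infinite_of_forall_exists_gt fun a =>
    let ⟨x, hx, hax⟩ := hX.exists_gt (a + 1)
    ⟨x - 1, Set.mem_image_of_mem _ hx, by omega⟩

theorem exists_image_sub_one_eq {X : Set ℕ} {U : Finset ℕ} {m : ℕ}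
    (hUX : ↑U ⊆ (· - 1) '' X) (hm : 1 ≤ m) (hU : IsLeast (U : Set ℕ) m) :
    ∃ A : Finset ℕ, ↑A ⊆ X ∧ IsLeast (A : Set ℕ) (m + 1) ∧ #A = #U ∧ A.image (· - 1) = U := by
  refine ⟨U.image (· + 1), ?_, ?_, card_image_of_injective _ (add_left_injective 1), ?_⟩
  · intro a ha
    obtain ⟨u, hu, rfl⟩ := mem_image.mp ha
    obtain ⟨x, hx, rfl⟩ := hUX hu
    have hx1 : 1 ≤ x - 1 := hm.trans (hU.2 hu)
    rwa [Nat.sub_add_cancel (by omega)]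
  · rw [coe_image]
    exact (StrictMono.map_isLeast fun a b h => Nat.add_lt_add_right h 1).mpr hU
  · simp [image_image, Function.comp_def]

/-- Given a regressive coloring `C` of exactly large sets, let `C'` color an
exactly large set `A` (with `min A ≥ 1`) by `1` iff all exactly large sets with
minimum `min A - 1` and remaining elements among `{x - 1 : x ∈ A}` get the same
`C`-color. If `X` is infinite and homogeneous for `C'`, then
`Y = {x - 1 : x ∈ X}` is min-homogeneous for `C`. -/
theorem rt_implies_km_coloring (C : Finset ℕ → ℕ) (hreg : RegressiveEL C)
    (C' : Finset ℕ → Fin 2)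
    (hC' : ∀ (A : Finset ℕ) (h : A.Nonempty), ExactlyLarge A → 1 ≤ A.min' h →
      (C' A = 1 ↔ ∀ S S' : Finset ℕ,
        S ⊆ A.image (· - 1) → S' ⊆ A.image (· - 1) →
        ExactlyLarge S → ExactlyLarge S' →
        S.min = ((A.min' h - 1 : ℕ) : WithTop ℕ) →
        S'.min = ((A.min' h - 1 : ℕ) : WithTop ℕ) → C S = C S'))
    (X : Set ℕ) (hX : X.Infinite) (hhom : HomogFor C' X) :
    MinHomogFor C ((fun x => x - 1) '' X) := by
  obtain ⟨c, hc⟩ := hhom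
  have hcolor : ∀ (U : Finset ℕ) (m : ℕ), ↑U ⊆ (· - 1) '' X → 1 ≤ m → IsLeast (U : Set ℕ) m →
      #U = m + 2 → (c = 1 ↔ ConstOnExactlyLarge C U m) := by
    intro U m hUX hm hU hUm
    obtain ⟨A, hAX, hA, hAU, hAimage⟩ := exists_image_sub_one_eq hUX hm hU
    have hAEL : ExactlyLarge A := exactlyLarge_iff_exists_isLeast.mpr ⟨m + 1, hA, hAU.trans hUm⟩
    have hmin : A.min' hAEL.1 = m + 1 := (isLeast_min' A _).unique hA
    rw [← hc A hAX hAEL, hC' A hAEL.1 hAEL (by omega), hAimage, hmin, Nat.add_sub_cancel]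
    rfl
  obtain ⟨U, m, hUX, hm, hU, hUm, hconst⟩ := exists_constOnExactlyLarge hreg hX.image_sub_one
  have hc1 : c = 1 := (hcolor U m hUX hm hU hUm).mpr hconst
  exact minHomogFor_of_forall_constOnExactlyLarge fun U m hUX hm hU hUm =>
    (hcolor U m hUX hm hU hUm).mp hc1
end

section
/- Let C be a 2-coloring of the exactly large subsets of ℕ. Define for each a ≥ 1 the coloring C_a : [{n : n > a}]^a → Fin 2 by C_a(x₁, …, x_a) = C({a, x₁, …, x_a}). Suppose (aᵢ)_{i∈ℕ} and (Xᵢ)_{i∈ℕ} satisfy: a₀ = min(M) for an infinite M ⊆ ℕ, each Xᵢ is an infinite C_{aᵢ}-homogeneous subset with X_{i+1} ⊆ Xᵢ ⊆ M, aᵢ < min(Xᵢ), and a_{i+1} = min(Xᵢ). Then the set A = {aᵢ : i ∈ ℕ} is infinite, and C restricted to exactly large subsets of A depends only on the minimum; consequently any infinite subset of A on which this induced 1-coloring is constant is C-homogeneous. -/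
/-- The iterated-Ramsey construction for RT(!ω): given a 2-coloring `C` of
exactly large sets and sequences `(aᵢ)`, `(Xᵢ)` with `a₀ = min M`, each `Xᵢ` an
infinite subset homogeneous for the induced coloring
`C_{aᵢ}(x₁,…,x_{aᵢ}) = C({aᵢ, x₁, …, x_{aᵢ}})`, `X_{i+1} ⊆ Xᵢ ⊆ M`,
`aᵢ < min Xᵢ` and `a_{i+1} = min Xᵢ`, the set `A = {aᵢ : i ∈ ℕ}` is infinite,
`C` on exactly large subsets of `A` depends only on the minimum, and any
infinite subset of `A` on which the induced 1-coloring is constant is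
`C`-homogeneous. -/
theorem iterated_ramsey_construction (C : Finset ℕ → Fin 2)
    (M : Set ℕ) (hM : M.Infinite) (a : ℕ → ℕ) (X : ℕ → Set ℕ)
    (ha0 : a 0 = sInf M)
    (hchain : ∀ i, X (i + 1) ⊆ X i) (hsubM : ∀ i, X i ⊆ M)
    (hXinf : ∀ i, (X i).Infinite)
    (hXhom : ∀ i, ∃ c : Fin 2, ∀ s : Finset ℕ, ↑s ⊆ X i → s.card = a i →
      (∀ x ∈ s, a i < x) → C (insert (a i) s) = c)
    (hlt : ∀ i, a i < sInf (X i)) (hsucc : ∀ i, a (i + 1) = sInf (X i)) :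
    (Set.range a).Infinite ∧ MinHomogFor C (Set.range a) ∧
      ∀ g : ℕ → Fin 2,
        (∀ (S : Finset ℕ) (h : S.Nonempty), ↑S ⊆ Set.range a → ExactlyLarge S →
          C S = g (S.min' h)) →
        ∀ A' ⊆ Set.range a, A'.Infinite → (∃ c, ∀ x ∈ A', g x = c) →
          HomogFor C A' := by
  have hmono : StrictMono a := strictMono_nat_of_lt_succ fun i => (hsucc i) ▸ hlt i
  have hXsub : ∀ i j, i ≤ j → X j ⊆ X i := by
    intro i j hij
    induction j, hij using Nat.le_induction with
    | base => exact le_refl _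
    | succ n hn ih => exact (hchain n).trans ih
  have hmem : ∀ i j, i < j → a j ∈ X i := by
    intro i j hij
    obtain ⟨k, rfl⟩ : ∃ k, j = k + 1 := ⟨j - 1, (Nat.succ_pred_eq_of_pos (Nat.pos_of_ne_zero (by omega))).symm⟩
    have h1 : a (k + 1) ∈ X k := by
      rw [hsucc k]; exact Nat.sInf_mem (hXinf k).nonempty
    exact hXsub i k (Nat.lt_succ_iff.mp hij) h1
  -- Key: value of C on exactly large S ⊆ range a with min' = a i is the homogeneous color of X i
  have key : ∀ (S : Finset ℕ) (hne : S.Nonempty), ↑S ⊆ Set.range a → ExactlyLarge S →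
      ∀ i, S.min' hne = a i → C S = (hXhom i).choose := by
    intro S hne hsub hel i hmin
    obtain ⟨hne', hcard⟩ := hel
    set s : Finset ℕ := S.erase (a i) with hs
    have hgt : ∀ x ∈ s, a i < x := by
      intro x hx
      have hxS : x ∈ S := Finset.mem_of_mem_erase hx
      have := S.min'_le x hxS
      rw [hmin] at this
      exact lt_of_le_of_ne this (Ne.symm (Finset.ne_of_mem_erase hx))
    have hssub : ↑s ⊆ X i := by
      intro x hx
      obtain ⟨j, rfl⟩ := hsub (Finset.mem_of_mem_erase hx)
      exact hmem i j (hmono.lt_iff_lt.mp (hgt _ hx))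
    have hminS : a i ∈ S := hmin ▸ S.min'_mem hne
    have hcard' : s.card = a i := by
      rw [hs, Finset.card_erase_of_mem hminS, hcard, hmin]; rfl
    have hSeq : S = insert (a i) s := by
      rw [hs, Finset.insert_erase hminS]
    rw [hSeq]
    exact (hXhom i).choose_spec s hssub hcard' hgt
  refine ⟨Set.infinite_range_of_injective hmono.injective, ?_, ?_⟩
  · intro S S' hS hS' hel hel' hmineq
    have hne := hel.1
    have hne' := hel'.1
    have hmin'eq : S.min' hne = S'.min' hne' := by
      have := hmineq
      rw [← Finset.coe_min' hne, ← Finset.coe_min' hne'] at this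
      exact_mod_cast this
    obtain ⟨i, hi⟩ := hS (S.min'_mem hne)
    rw [key S hne hS hel i hi.symm, key S' hne' hS' hel' i (hmin'eq ▸ hi.symm)]
  · intro g hg A' hA' _ ⟨c, hc⟩
    refine ⟨c, fun S hS hel => ?_⟩
    have hne := hel.1
    rw [hg S hne (hS.trans hA') hel]
    exact hc _ (hS (S.min'_mem hne))
end
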